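/- For uniform quadratic (degree 2) cardinal B-splines with spacing h, the quadrature rule supported on the 5 points consisting of the knots and midpoints inside the support of B_i, with weights (h/30)·[2, 7, 12, 7, 2], exactly reproduces ∫ B_i(ζ) B_j(ζ) dζ for all j with |j - i| ≤ 2. -/

import Mathlib

open MeasureTheory

/-- The standard quadratic cardinal B-spline with knots `0,1,2,3`. -/
noncomputable def N2 (t : ℝ) : ℝ :=
  if 0 ≤ t ∧ t ≤ 1 then t ^ 2 / 2
  else if 1 ≤ t ∧ t ≤ 2 then (-2 * t ^ 2 + 6 * t - 3) / 2
  else if 2 ≤ t ∧ t ≤ 3 then (3 - t) ^ 2 / 2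
  else 0

/-- Uniform quadratic cardinal B-spline with spacing `h`: the translate by `i·h`
of `N2(·/h)`, supported on `[i·h, (i+3)·h]`. -/
noncomputable def B2 (h : ℝ) (i : ℤ) (ζ : ℝ) : ℝ := N2 (ζ / h - (i : ℝ))

/-!
After the substitution `ζ = (i + t) h`, with `d = j - i`, the quadrature sum becomes
`(h / 30) · Σ w_q N2 (c_q - d)` over the nodes `c_q ∈ {1/2, 1, 3/2, 2, 5/2}`, and the integral
becomes `h · ∫₀³ N2 t · N2 (t - d) dt`. Folding `[0, 3]` onto `[0, 1]` turns the integrand into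
the quartic `Σₖ N2 (s + k) · N2 (s + k - d)`, whose integral is `11/20`, `13/60`, `1/120` for
`|d| = 0, 1, 2`; the quadrature sums give the same numbers from the values `1/8, 3/4, 1/8` of `N2`
at the midpoints and `1/2` at the interior knots.
-/

lemma N2_eq_ite (t : ℝ) : N2 t =
    if t ≤ 1 then (if t ≤ 0 then 0 else t ^ 2 / 2)
    else if t ≤ 2 then (-2 * t ^ 2 + 6 * t - 3) / 2
    else if t ≤ 3 then (3 - t) ^ 2 / 2 else 0 := by
  unfold N2
  split_ifs <;> first | grind | nlinarith

theorem continuous_N2 : Continuous N2 := by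
  rw [show N2 = _ from funext N2_eq_ite]
  refine Continuous.if_le ?_ ?_ continuous_id continuous_const
    fun t ht ↦ by subst ht; norm_num
  · exact Continuous.if_le continuous_const (by fun_prop) continuous_id continuous_const
      fun t ht ↦ by subst ht; norm_num
  · refine Continuous.if_le (by fun_prop) ?_ continuous_id continuous_const
      fun t ht ↦ by subst ht; norm_num
    exact Continuous.if_le (by fun_prop) continuous_const continuous_id continuous_const
      fun t ht ↦ by subst ht; norm_num

lemma N2_eq_zero_of_nonpos {t : ℝ} (ht : t ≤ 0) : N2 t = 0 := by
  unfold N2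
  split_ifs <;> nlinarith

lemma N2_eq_zero_of_three_le {t : ℝ} (ht : 3 ≤ t) : N2 t = 0 := by
  unfold N2
  split_ifs <;> nlinarith

noncomputable def N2Piece (k : ℤ) (s : ℝ) : ℝ :=
  if k = 0 then s ^ 2 / 2 else if k = 1 then (-2 * s ^ 2 + 2 * s + 1) / 2
  else if k = 2 then (1 - s) ^ 2 / 2 else 0

lemma continuous_N2Piece (k : ℤ) : Continuous (N2Piece k) := by
  unfold N2Piece
  split_ifs <;> fun_prop

lemma N2_add_intCast {s : ℝ} (hs : s ∈ Set.Icc (0 : ℝ) 1) (k : ℤ) :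
    N2 (s + k) = N2Piece k s := by
  obtain ⟨hs₀, hs₁⟩ := hs
  rcases (by omega : k ≤ -1 ∨ 3 ≤ k ∨ k = 0 ∨ k = 1 ∨ k = 2) with hk | hk | rfl | rfl | rfl
  · have hk' : (k : ℝ) ≤ -1 := by exact_mod_cast hk
    rw [N2_eq_zero_of_nonpos (by linarith), N2Piece, if_neg (by omega), if_neg (by omega),
      if_neg (by omega)]
  · have hk' : (3 : ℝ) ≤ k := by exact_mod_cast hk
    rw [N2_eq_zero_of_three_le (by linarith), N2Piece, if_neg (by omega), if_neg (by omega),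
      if_neg (by omega)]
  all_goals
    norm_num [N2Piece, N2_eq_ite]
    split_ifs <;> nlinarith

lemma integral_N2_mul_eq_intervalIntegral (g : ℝ → ℝ) :
    ∫ t, N2 t * g t = ∫ t in (0 : ℝ)..3, N2 t * g t := by
  rw [intervalIntegral.integral_of_le (by norm_num),
    setIntegral_eq_integral_of_forall_compl_eq_zero fun t ht ↦ ?_]
  rw [Set.mem_Ioc, not_and_or, not_lt, not_le] at ht
  rcases ht with ht | ht
  · rw [N2_eq_zero_of_nonpos ht, zero_mul]
  · rw [N2_eq_zero_of_three_le ht.le, zero_mul]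

lemma integral_B2_mul_B2 (h : ℝ) (i j : ℤ) :
    ∫ ζ, B2 h i ζ * B2 h j ζ = |h| * ∫ t in (0 : ℝ)..3, N2 t * N2 (t - (j - i : ℤ)) := by
  have hdiv := Measure.integral_comp_div (fun u ↦ N2 (u - i) * N2 (u - j)) h
  simp only [B2]
  rw [hdiv, smul_eq_mul, ← integral_N2_mul_eq_intervalIntegral,
    ← integral_sub_right_eq_self (fun t ↦ N2 t * N2 (t - (j - i : ℤ))) (i : ℝ)]
  simp only [Int.cast_sub, sub_sub_sub_cancel_right]

lemma B2_add_mul {h : ℝ} (hh : h ≠ 0) (i d : ℤ) (c : ℝ) :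
    B2 h (i + d) ((i + c) * h) = N2 (c - d) := by
  rw [B2, mul_div_cancel_right₀ _ hh]
  push_cast
  ring_nf

lemma intervalIntegral_natCast_eq_sum {F : ℝ → ℝ} (hF : Continuous F) (n : ℕ) :
    ∫ t in (0 : ℝ)..n, F t = ∑ k ∈ Finset.range n, ∫ s in (0 : ℝ)..1, F (s + k) := by
  rw [← Nat.cast_zero, ← intervalIntegral.sum_integral_adjacent_intervals
    (a := fun k : ℕ ↦ (k : ℝ)) (μ := volume) fun k _ ↦ hF.intervalIntegrable _ _]
  refine Finset.sum_congr rfl fun k _ ↦ ?_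
  rw [intervalIntegral.integral_comp_add_right, Nat.cast_zero, zero_add, add_comm 1, Nat.cast_succ]

lemma integral_unitInterval_of_eq_quartic {f : ℝ → ℝ} (c₀ c₁ c₂ c₃ c₄ : ℝ)
    (hf : ∀ x, f x = c₀ + c₁ * x + c₂ * x ^ 2 + c₃ * x ^ 3 + c₄ * x ^ 4) :
    ∫ x in (0 : ℝ)..1, f x = c₀ + c₁ / 2 + c₂ / 3 + c₃ / 4 + c₄ / 5 := by
  simp only [hf]
  simp (disch := exact Continuous.intervalIntegrable (by fun_prop) _ _) only
    [intervalIntegral.integral_add, integral_pow, intervalIntegral.integral_const_mul,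
      intervalIntegral.integral_const]
  rw [intervalIntegral.integral_const_mul, integral_id]
  norm_num
  ring

lemma intervalIntegral_N2_mul_N2_sub_eq_sum_N2Piece (d : ℤ) :
    ∫ t in (0 : ℝ)..3, N2 t * N2 (t - d) =
      ∫ s in (0 : ℝ)..1, ∑ k ∈ Finset.range 3, N2Piece k s * N2Piece (k - d) s := by
  have hsplit := intervalIntegral_natCast_eq_sum (F := fun t ↦ N2 t * N2 (t - d))
    (continuous_N2.mul (continuous_N2.comp (continuous_sub_right _))) 3
  rw [Nat.cast_ofNat] at hsplit
  rw [hsplit, intervalIntegral.integral_finsetSum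
    (f := fun (k : ℕ) s ↦ N2Piece k s * N2Piece (k - d) s) fun k _ ↦
    ((continuous_N2Piece k).mul (continuous_N2Piece _)).intervalIntegrable _ _]
  refine Finset.sum_congr rfl fun k _ ↦ intervalIntegral.integral_congr fun s hs ↦ ?_
  rw [Set.uIcc_of_le zero_le_one] at hs
  rw [show s + k - d = s + ((k - d : ℤ) : ℝ) by push_cast; ring, ← Int.cast_natCast k,
    N2_add_intCast hs, N2_add_intCast hs]

lemma intervalIntegral_N2_mul_N2_sub_of_abs_le_two {d : ℤ} (hd : |d| ≤ 2) :
    ∫ t in (0 : ℝ)..3, N2 t * N2 (t - d) =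
      if d = 0 then 11 / 20 else if |d| = 1 then 13 / 60 else 1 / 120 := by
  rw [intervalIntegral_N2_mul_N2_sub_eq_sum_N2Piece]
  obtain ⟨hd₁, hd₂⟩ := abs_le.mp hd
  interval_cases d
  · rw [integral_unitInterval_of_eq_quartic 0 0 (1 / 4) (-1 / 2) (1 / 4) fun s ↦ by
      norm_num [Finset.sum_range_succ, N2Piece]; ring]
    norm_num
  · rw [integral_unitInterval_of_eq_quartic (1 / 4) 0 (-1) 2 (-1) fun s ↦ by
      norm_num [Finset.sum_range_succ, N2Piece]; ring]
    norm_num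
  · rw [integral_unitInterval_of_eq_quartic (1 / 2) 0 (3 / 2) (-3) (3 / 2) fun s ↦ by
      norm_num [Finset.sum_range_succ, N2Piece]; ring]
    norm_num
  · rw [integral_unitInterval_of_eq_quartic (1 / 4) 0 (-1) 2 (-1) fun s ↦ by
      norm_num [Finset.sum_range_succ, N2Piece]; ring]
    norm_num
  · rw [integral_unitInterval_of_eq_quartic 0 0 (1 / 4) (-1 / 2) (1 / 4) fun s ↦ by
      norm_num [Finset.sum_range_succ, N2Piece]; ring]
    norm_num

/-- Weighted quadrature, 5 points (knots and midpoints inside `supp B_i`),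
weights `(h/30)·[2,7,12,7,2]`, exactly reproduces `∫ B_i B_j` for `|j-i| ≤ 2`. -/
theorem stmt6 (h : ℝ) (hh : 0 < h) (i j : ℤ) (hij : |j - i| ≤ 2) :
    (h / 30) * 2 * B2 h j (((i : ℝ) + 1/2) * h)
      + (h / 30) * 7 * B2 h j (((i : ℝ) + 1) * h)
      + (h / 30) * 12 * B2 h j (((i : ℝ) + 3/2) * h)
      + (h / 30) * 7 * B2 h j (((i : ℝ) + 2) * h)
      + (h / 30) * 2 * B2 h j (((i : ℝ) + 5/2) * h)
      = ∫ ζ : ℝ, B2 h i ζ * B2 h j ζ := by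
  obtain ⟨d, rfl⟩ : ∃ d : ℤ, j = i + d := ⟨j - i, by ring⟩
  rw [add_sub_cancel_left] at hij
  rw [integral_B2_mul_B2, add_sub_cancel_left, intervalIntegral_N2_mul_N2_sub_of_abs_le_two hij,
    abs_of_pos hh]
  simp only [B2_add_mul hh.ne']
  obtain ⟨hd₁, hd₂⟩ := abs_le.mp hij
  interval_cases d <;> norm_num [N2] <;> ring
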